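/- arXiv:1308.5170 — 3 statements merged into one kernel-verified Lean document; each statement's English description precedes it below -/
import Mathlib

section
/- Let G be a finite digraph and let G' be obtained from G by out-contracting an edge (u,v): delete u, and for every edge (x,u) add an edge (x,v), removing all edges incident to u. Then for any vertices a,b of G' (so a,b ≠ u), if there is a directed path from a to b in G', there is a directed path from a to b in G. In particular, out-contraction creates no new directed cycles among the surviving vertices. -/
/-! A contracted edge `(x, v)` coming from an edge `(x, u)` is realised in the original
graph by the two-edge path `x → u → v`, and every other contracted edge is an original
edge; so each step of a contracted path lifts to a path in `G`. -/

open Relation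

theorem reflTransGen_of_edge_or_redirected_edge {V : Type*} {E : V → V → Prop} {u v x y : V}
    (huv : E u v) (hxy : E x y ∨ (y = v ∧ E x u)) : ReflTransGen E x y := by
  rcases hxy with hxy | ⟨rfl, hxu⟩
  · exact .single hxy
  · exact (ReflTransGen.single hxu).tail huv

theorem out_contraction_reachability_general
    {V : Type*} (E : V → V → Prop) (u v : V) (huv : E u v)
    (a b : V)
    (h : Relation.ReflTransGen
      (fun x y => x ≠ u ∧ y ≠ u ∧ (E x y ∨ (y = v ∧ E x u))) a b) :
    Relation.ReflTransGen E a b :=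
  reflTransGen_closed (fun _ _ hxy => reflTransGen_of_edge_or_redirected_edge huv hxy.2.2) a b h

/-- Out-contracting an edge `(u,v)` (delete `u`, redirect each edge
`(x,u)` to `(x,v)`, drop all edges incident to `u`) creates no new reachability:
any directed path between surviving vertices in the contracted graph yields a
directed path in the original graph. -/
theorem out_contraction_reachability
    {V : Type*} [Fintype V] (E : V → V → Prop) (u v : V) (huv : E u v)
    (a b : V) (ha : a ≠ u) (hb : b ≠ u)
    (h : Relation.ReflTransGen
      (fun x y => x ≠ u ∧ y ≠ u ∧ (E x y ∨ (y = v ∧ E x u))) a b) :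
    Relation.ReflTransGen E a b :=
  out_contraction_reachability_general E u v huv a b h
end

section
/- If a digraph H is obtained from a digraph G by eliminating a vertex u of out-degree 0 (i.e., deleting u), then H is a directed minor of G, and if G has a directed elimination ordering of width ≤ k, then so does H with the width bound preserved; more precisely, G has an elimination ordering of width ≤ k if and only if G∖{u} does, when u has out-degree 0 in G. -/
open Classical

/-- `ElimW E S k` : the digraph with edge relation `E` induced on the vertex set `S`
admits a directed elimination ordering of width ≤ `k`. -/
inductive ElimW {V : Type*} [DecidableEq V] : (V → V → Prop) → Finset V → ℕ → Prop where
  | empty : ∀ (E : V → V → Prop) (k : ℕ), ElimW E ∅ k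
  | step : ∀ (E : V → V → Prop) (S : Finset V) (k : ℕ) (u : V), u ∈ S →
      ((S.erase u).filter (fun y => E u y)).card ≤ k →
      ElimW (fun x y => x ≠ y ∧ (E x y ∨ (E x u ∧ E u y))) (S.erase u) k →
      ElimW E S k

/-! A sink has no out-neighbours, so eliminating it adds no edges: it is plain deletion.
Conversely, a sink can be eliminated first at cost `0`, and it can be dropped from any
elimination ordering because it never contributes an edge to a later elimination graph. -/

section

variable {V : Type*}

def elimGraph (E : V → V → Prop) (u : V) : V → V → Prop :=
  fun x y => x ≠ y ∧ (E x y ∨ (E x u ∧ E u y))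

lemma elimGraph_iff_of_sink {E : V → V → Prop} {u : V} (hu : ∀ y, ¬ E u y) {x y : V}
    (hxy : x ≠ y) : elimGraph E u x y ↔ E x y := by
  simp [elimGraph, hxy, hu]

variable [DecidableEq V]

lemma elimGraph_congr {E E' : V → V → Prop} {S : Finset V} {u : V} (hu : u ∈ S)
    (h : ∀ x ∈ S, ∀ y ∈ S, x ≠ y → (E x y ↔ E' x y)) :
    ∀ x ∈ S.erase u, ∀ y ∈ S.erase u, x ≠ y → (elimGraph E u x y ↔ elimGraph E' u x y) := by
  intro x hx y hy hxy
  obtain ⟨hxu, hxS⟩ := Finset.mem_erase.1 hx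
  obtain ⟨hyu, hyS⟩ := Finset.mem_erase.1 hy
  simp only [elimGraph, h x hxS y hyS hxy, h x hxS u hu hxu, h u hu y hyS (Ne.symm hyu)]

namespace ElimW

lemma congr {E : V → V → Prop} {S : Finset V} {k : ℕ} (hE : ElimW E S k) :
    ∀ E' : V → V → Prop, (∀ x ∈ S, ∀ y ∈ S, x ≠ y → (E x y ↔ E' x y)) → ElimW E' S k := by
  induction hE with
  | empty E k => exact fun E' _ => .empty E' k
  | step E S k u hu hcard _ ih =>
    intro E' h
    have hout : (S.erase u).filter (E' u ·) = (S.erase u).filter (E u ·) :=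
      Finset.filter_congr fun y hy =>
        (h u hu y (Finset.mem_of_mem_erase hy) (Finset.ne_of_mem_erase hy).symm).symm
    exact .step E' S k u hu (hout ▸ hcard) (ih _ (elimGraph_congr hu h))

lemma erase_of_sink {E : V → V → Prop} {S : Finset V} {k : ℕ} {u : V}
    (hE : ElimW E S k) (hu : ∀ y, ¬ E u y) : ElimW E (S.erase u) k := by
  induction hE with
  | empty E k => simpa using ElimW.empty E k
  | step E S k v hv hcard hrec ih =>
    by_cases huv : u = v
    · subst huv
      exact hrec.congr E fun x _ y _ hxy => elimGraph_iff_of_sink hu hxy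
    · have hu' : ∀ y, ¬ elimGraph E v u y := by
        rintro y ⟨-, h | ⟨h, -⟩⟩
        exacts [hu y h, hu v h]
      have hsub : ((S.erase u).erase v).filter (E v ·) ⊆ (S.erase v).filter (E v ·) :=
        Finset.filter_subset_filter _ (Finset.erase_subset_erase v (Finset.erase_subset u S))
      refine .step E (S.erase u) k v (Finset.mem_erase.2 ⟨Ne.symm huv, hv⟩)
        ((Finset.card_le_card hsub).trans hcard) ?_
      rw [Finset.erase_right_comm]
      exact ih hu'

lemma of_erase_of_sink {E : V → V → Prop} {S : Finset V} {k : ℕ} {u : V} (huS : u ∈ S)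
    (hu : ∀ y, ¬ E u y) (hE : ElimW E (S.erase u) k) : ElimW E S k := by
  refine .step E S k u huS ?_ (hE.congr _ fun x _ y _ hxy => (elimGraph_iff_of_sink hu hxy).symm)
  simp [Finset.filter_false_of_mem fun y _ => hu y]

end ElimW

end

/-- If `u` has out-degree 0 in `G`, then eliminating `u` is just
deleting `u`, and `G` admits a directed elimination ordering of width ≤ k iff
`G ∖ {u}` does. -/
theorem elimW_iff_of_sink
    {V : Type*} [Fintype V] [DecidableEq V] (E : V → V → Prop)
    (u : V) (hdeg : ∀ y, ¬ E u y) (k : ℕ) :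
    ElimW E Finset.univ k ↔ ElimW E (Finset.univ.erase u) k :=
  ⟨fun h => h.erase_of_sink hdeg, ElimW.of_erase_of_sink (Finset.mem_univ u) hdeg⟩
end

section
/- Let G be a finite digraph with all out-degrees exactly 2, let (u,v) be a single edge ((u,v) ∈ E, (v,u) ∉ E), and let G' be the out-contraction of (u,v). If G' has minimum out-degree ≥ 2 except for exactly one vertex of out-degree < 2, then that exceptional vertex w satisfies w ≠ v and the out-neighborhood of w in G is exactly {u, v}. -/
/-! In `G'` the out-neighbourhood of `w` is `N(w)` if `u ∉ N(w)` and `insert v (N(w) \ {u})`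
otherwise. Only the second can have one element when `|N(w)| = 2`, and only if the surviving
neighbour is `v` itself. -/

open Finset

section OutContraction

variable {V : Type*} [Fintype V] [DecidableEq V] (E : V → V → Prop) [DecidableRel E] {u : V}
  (v : V) {w : V}

theorem filter_outContraction_eq_of_not_adj (hwu : ¬ E w u) :
    (univ.erase u).filter (fun y => (E w y ∧ y ≠ u) ∨ (y = v ∧ E w u)) =
      univ.filter (fun y => E w y) := by
  ext y
  by_cases hyu : y = u
  · subst hyu
    simp [hwu]
  · simp [hyu, hwu]

theorem filter_outContraction_eq_of_adj (hvu : v ≠ u) (hwu : E w u) :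
    (univ.erase u).filter (fun y => (E w y ∧ y ≠ u) ∨ (y = v ∧ E w u)) =
      insert v ((univ.filter (fun y => E w y)).erase u) := by
  ext y
  by_cases hyv : y = v
  · subst hyv
    simp [hvu, hwu]
  · simp [hyv, and_comm]

end OutContraction

theorem out_contraction_degree_drop_general
    {V : Type*} [Fintype V] [DecidableEq V]
    (E : V → V → Prop) [DecidableRel E]
    (u v w : V) (huv : E u v) (hvu : ¬ E v u)
    (hdegG : (univ.filter (fun y => E w y)).card = 2)
    (hdegG' : ((univ.erase u).filter (fun y => (E w y ∧ y ≠ u) ∨ (y = v ∧ E w u))).card = 1) :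
    E w u ∧ E w v ∧ ∀ y, E w y → y = u ∨ y = v := by
  have hv_ne_u : v ≠ u := by
    rintro rfl
    exact hvu huv
  have hEwu : E w u := by
    by_contra hEwu
    rw [filter_outContraction_eq_of_not_adj E v hEwu, hdegG] at hdegG'
    exact absurd hdegG' (by norm_num)
  obtain ⟨a, ha⟩ : ∃ a, (univ.filter (fun y => E w y)).erase u = {a} := by
    rw [← card_eq_one, card_erase_of_mem (by simpa using hEwu), hdegG]
  rw [filter_outContraction_eq_of_adj E v hv_ne_u hEwu, ha, card_insert_eq_ite] at hdegG'
  obtain rfl : v = a := by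
    by_contra hva
    simp [hva] at hdegG'
  have hnbhd : ∀ y, y ≠ u ∧ E w y ↔ y = v := fun y => by
    simpa using Finset.ext_iff.mp ha y
  refine ⟨hEwu, ((hnbhd v).mpr rfl).2, fun y hy => ?_⟩
  exact (eq_or_ne y u).imp_right fun hyu => (hnbhd y).mp ⟨hyu, hy⟩

/-- Let all out-degrees of `G` be exactly 2, `(u,v)` a single edge, and
`G'` the out-contraction of `(u,v)`. If `w ≠ u, v` has out-degree 2 in `G` but
out-degree 1 in `G'`, then the out-neighborhood of `w` in `G` is exactly `{u, v}`. -/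
theorem out_contraction_degree_drop
    {V : Type*} [Fintype V] [DecidableEq V]
    (E : V → V → Prop) [DecidableRel E]
    (u v w : V) (huv : E u v) (hvu : ¬ E v u) (hwu : w ≠ u) (hwv : w ≠ v)
    (hdegG : (univ.filter (fun y => E w y)).card = 2)
    (hdegG' : ((univ.erase u).filter (fun y => (E w y ∧ y ≠ u) ∨ (y = v ∧ E w u))).card = 1) :
    E w u ∧ E w v ∧ ∀ y, E w y → y = u ∨ y = v :=
  out_contraction_degree_drop_general E u v w huv hvu hdegG hdegG'
end
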